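/- arXiv:math/0610027 — 2 statements merged into one kernel-verified Lean document; each statement's English description precedes it below -/
import Mathlib

section
/- Let τ ∈ Δ and φ ∈ ℝ with φ ≠ 0, and let S₁ = {F_t}_{t≥0} be the nontrivial group of elliptic automorphisms F_t(z) = m_τ(e^{iφt}·m_τ(z)). Let S₂ = {G_t}_{t≥0} be a one-parameter continuous semigroup on Δ. Then S₁ and S₂ commute (F_t(G_s(z)) = G_s(F_t(z)) for all s,t ≥ 0 and z ∈ Δ) if and only if there exists a ∈ ℂ such that G_t(z) = m_τ(e^{−at}·m_τ(z)) for all t ≥ 0 and z ∈ Δ. -/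
/-! Conjugating by the involution `m_τ` turns the elliptic group into the rotations
`w ↦ e^{iφt} w` and `G_s` into `H_s = m_τ ∘ G_s ∘ m_τ`, again a continuous semigroup on the disk.
A holomorphic self-map commuting with rotations through angles accumulating at `0` is linear
by the identity theorem, so `H_s w = c(s) w`; the semigroup law makes `c` multiplicative, and
right-continuity at `0` forces `c(s) = e^{bs}` (compare `c` with `e^{bs}` along the dyadic
points `δ / 2ⁿ`). Conversely such maps commute with rotations; the only care needed is that
`|e^{-as}| ≤ 1`, because `m_τ` maps the exterior of the disk to the exterior. -/

open Complex Filter Set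

noncomputable section

/-- The open unit disk in the complex plane. -/
def unitDisk : Set ℂ := {z : ℂ | ‖z‖ < 1}

/-- The Stolz angle at a boundary point `τ` with half-opening `α`. -/
def stolzAngle (τ : ℂ) (α : ℝ) : Set ℂ :=
  {z ∈ unitDisk | |Complex.arg (1 - (starRingEnd ℂ) τ * z)| < α}

/-- `h` has angular limit `L` at `τ`: `h z → L` as `z → τ` in every Stolz angle. -/
def AngularLimit (h : ℂ → ℂ) (τ L : ℂ) : Prop :=
  ∀ α : ℝ, 0 < α → α < Real.pi / 2 →
    Tendsto h (nhdsWithin τ (stolzAngle τ α)) (nhds L)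

/-- A one-parameter continuous semigroup of holomorphic self-mappings of the unit disk. -/
structure ContSemigroupOn (F : ℝ → ℂ → ℂ) : Prop where
  holo : ∀ t : ℝ, 0 ≤ t → DifferentiableOn ℂ (F t) unitDisk
  maps : ∀ t : ℝ, 0 ≤ t → MapsTo (F t) unitDisk unitDisk
  comp : ∀ s : ℝ, 0 ≤ s → ∀ t : ℝ, 0 ≤ t → ∀ z ∈ unitDisk, F (t + s) z = F t (F s z)
  cont : ∀ z ∈ unitDisk, Tendsto (fun t : ℝ => F t z) (nhdsWithin 0 (Set.Ioi 0)) (nhds z)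

/-- `f` is the infinitesimal generator of the semigroup `F`:
for each `z ∈ Δ`, `u(t) = F t z` solves `u' + f(u) = 0`, `u 0 = z`. -/
def Generates (f : ℂ → ℂ) (F : ℝ → ℂ → ℂ) : Prop :=
  ∀ z ∈ unitDisk, F 0 z = z ∧
    ∀ t : ℝ, 0 ≤ t →
      HasDerivWithinAt (fun s : ℝ => F s z) (-(f (F t z))) (Set.Ici 0) t

/-- `τ` is a boundary null point of `f`: `f (r τ) → 0` as `r → 1⁻`. -/
def BoundaryNullPoint (f : ℂ → ℂ) (τ : ℂ) : Prop :=
  Tendsto (fun r : ℝ => f ((r : ℂ) * τ)) (nhdsWithin 1 (Set.Iio 1)) (nhds 0)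

/-- An automorphism of the unit disk: a holomorphic bijection of the disk onto itself. -/
def IsDiskAutomorphism (F : ℂ → ℂ) : Prop :=
  DifferentiableOn ℂ F unitDisk ∧ BijOn F unitDisk unitDisk

/-- The Möbius involution `m_τ(z) = (τ - z)/(1 - τ̄ z)`. -/
def mobius (τ z : ℂ) : ℂ := (τ - z) / (1 - (starRingEnd ℂ) τ * z)

open Topology ComplexConjugate

lemma mem_unitDisk {z : ℂ} : z ∈ unitDisk ↔ ‖z‖ < 1 := Iff.rfl

lemma unitDisk_eq_ball : unitDisk = Metric.ball 0 1 := by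
  ext z
  simp [mem_unitDisk]

lemma forall_comm_conj_iff {α : Type*} {s : Set α} {m g r : α → α}
    (hm : ∀ x ∈ s, m (m x) = x) (hms : MapsTo m s s) (hg : MapsTo g s s) (hr : MapsTo r s s) :
    (∀ z ∈ s, m (r (m (g z))) = g (m (r (m z)))) ↔
      ∀ w ∈ s, m (g (m (r w))) = r (m (g (m w))) := by
  constructor
  · intro h w hw
    have hmw := h (m w) (hms hw)
    rw [hm w hw] at hmw
    rw [← hmw, hm _ (hr (hms (hg (hms hw))))]
  · intro h z hz
    have hmz := h (m z) (hms hz)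
    rw [hm z hz] at hmz
    rw [← hmz, hm _ (hg (hms (hr (hms hz))))]

section Mobius

variable {τ : ℂ}

lemma one_sub_conj_mul_ne_zero (hτ : τ ∈ unitDisk) {z : ℂ} (hz : ‖z‖ ≤ 1) :
    1 - conj τ * z ≠ 0 := by
  have hlt : ‖conj τ * z‖ < 1 := by
    rw [norm_mul, RCLike.norm_conj]
    nlinarith [norm_nonneg z, norm_nonneg τ, mem_unitDisk.1 hτ]
  intro h
  rw [← sub_eq_zero.1 h, norm_one] at hlt
  exact lt_irrefl _ hlt

lemma normSq_one_sub_conj_mul_sub_normSq_sub (τ z : ℂ) :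
    normSq (1 - conj τ * z) - normSq (τ - z) = (1 - normSq τ) * (1 - normSq z) := by
  simp only [normSq_apply, sub_re, sub_im, mul_re, mul_im, conj_re, conj_im, one_re, one_im]
  ring

lemma norm_mobius_lt_one_iff (hτ : τ ∈ unitDisk) {z : ℂ} (hd : 1 - conj τ * z ≠ 0) :
    ‖mobius τ z‖ < 1 ↔ ‖z‖ < 1 := by
  have hτ2 : normSq τ < 1 := by
    rw [← Complex.sq_norm]; nlinarith [norm_nonneg τ, mem_unitDisk.1 hτ]
  rw [mobius, norm_div, div_lt_one (norm_pos_iff.2 hd),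
    ← pow_lt_pow_iff_left₀ (norm_nonneg _) (norm_nonneg _) two_ne_zero,
    Complex.sq_norm, Complex.sq_norm, ← sub_pos, normSq_one_sub_conj_mul_sub_normSq_sub,
    mul_pos_iff_of_pos_left (by linarith), sub_pos, ← Complex.sq_norm,
    sq_lt_one_iff_abs_lt_one, abs_norm]

lemma mobius_mem_unitDisk (hτ : τ ∈ unitDisk) {z : ℂ} (hz : z ∈ unitDisk) :
    mobius τ z ∈ unitDisk :=
  (norm_mobius_lt_one_iff hτ (one_sub_conj_mul_ne_zero hτ hz.le)).2 hz

lemma mapsTo_mobius (hτ : τ ∈ unitDisk) : MapsTo (mobius τ) unitDisk unitDisk :=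
  fun _ hz => mobius_mem_unitDisk hτ hz

lemma mobius_mobius (hτ : τ ∈ unitDisk) {z : ℂ} (hd : 1 - conj τ * z ≠ 0) :
    mobius τ (mobius τ z) = z := by
  have hτ' : 1 - conj τ * τ ≠ 0 := one_sub_conj_mul_ne_zero hτ hτ.le
  have hnum : τ - mobius τ z = z * (1 - conj τ * τ) / (1 - conj τ * z) := by
    rw [mobius, eq_div_iff hd, sub_mul, div_mul_cancel₀ _ hd]
    ring
  have hden : 1 - conj τ * mobius τ z = (1 - conj τ * τ) / (1 - conj τ * z) := by
    rw [mobius, eq_div_iff hd, sub_mul, mul_assoc, div_mul_cancel₀ _ hd]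
    ring
  rw [mobius, hnum, hden, div_div_div_cancel_right₀ hd, mul_div_cancel_right₀ _ hτ']

lemma mobius_mobius_of_mem (hτ : τ ∈ unitDisk) {z : ℂ} (hz : z ∈ unitDisk) :
    mobius τ (mobius τ z) = z :=
  mobius_mobius hτ (one_sub_conj_mul_ne_zero hτ hz.le)

lemma differentiableOn_mobius (hτ : τ ∈ unitDisk) : DifferentiableOn ℂ (mobius τ) unitDisk :=
  fun z hz => (show DifferentiableAt ℂ (fun w => (τ - w) / (1 - conj τ * w)) z from
    DifferentiableAt.div (by fun_prop) (by fun_prop)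
      (one_sub_conj_mul_ne_zero hτ hz.le)).differentiableWithinAt

lemma continuousAt_mobius (hτ : τ ∈ unitDisk) {z : ℂ} (hz : z ∈ unitDisk) :
    ContinuousAt (mobius τ) z :=
  (differentiableOn_mobius hτ).continuousOn.continuousAt
    (unitDisk_eq_ball ▸ Metric.isOpen_ball |>.mem_nhds hz)

lemma mul_mem_unitDisk_of_mobius_mul_mem (hτ : τ ∈ unitDisk) {e : ℂ}
    (h : ∀ w ∈ unitDisk, mobius τ (e * w) ∈ unitDisk) {w : ℂ} (hw : w ∈ unitDisk) :
    e * w ∈ unitDisk := by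
  by_cases hd : 1 - conj τ * (e * w) = 0
  · -- the denominators at `e * w` and at `e * -w` add up to `2`
    have hd' : 1 - conj τ * (e * -w) ≠ 0 := by
      rw [mul_neg, mul_neg, sub_neg_eq_add, ← sub_eq_zero.1 hd]
      norm_num
    have hneg := (norm_mobius_lt_one_iff hτ hd').1 (h (-w) (by simpa [mem_unitDisk] using hw))
    rwa [mul_neg, norm_neg] at hneg
  · exact (norm_mobius_lt_one_iff hτ hd).1 (h w hw)

lemma forall_eq_mobius_mul_mobius_iff (hτ : τ ∈ unitDisk) {g : ℂ → ℂ}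
    (hg : MapsTo g unitDisk unitDisk) (e : ℂ) :
    (∀ z ∈ unitDisk, g z = mobius τ (e * mobius τ z)) ↔
      ∀ w ∈ unitDisk, mobius τ (g (mobius τ w)) = e * w := by
  constructor
  · intro h w hw
    have hgm : g (mobius τ w) = mobius τ (e * w) := by
      rw [h _ (mobius_mem_unitDisk hτ hw), mobius_mobius_of_mem hτ hw]
    have hew : e * w ∈ unitDisk := by
      refine mul_mem_unitDisk_of_mobius_mul_mem hτ (fun v hv => ?_) hw
      rw [← mobius_mobius_of_mem hτ hv, ← h _ (mobius_mem_unitDisk hτ hv)]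
      exact hg (mobius_mem_unitDisk hτ hv)
    rw [hgm, mobius_mobius_of_mem hτ hew]
  · intro h z hz
    rw [← mobius_mobius_of_mem hτ (hg hz), ← h _ (mobius_mem_unitDisk hτ hz),
      mobius_mobius_of_mem hτ hz]

end Mobius

section MulOnNonneg

variable {c : ℝ → ℂ}

lemma map_zero_eq_one_of_map_add (hmul : ∀ s : ℝ, 0 ≤ s → ∀ t : ℝ, 0 ≤ t → c (s + t) = c s * c t)
    (hc : Tendsto c (𝓝[>] 0) (𝓝 1)) : c 0 = 1 := by
  have hlim : Tendsto (fun t => c t * c 0) (𝓝[>] 0) (𝓝 1) :=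
    hc.congr' (eventually_nhdsWithin_of_forall fun t ht => by
      show c t = c t * c 0
      rw [← hmul t (le_of_lt ht) 0 le_rfl, add_zero])
  simpa using tendsto_nhds_unique (hc.mul_const (c 0)) hlim

lemma tendsto_nhdsGE_of_map_add
    (hmul : ∀ s : ℝ, 0 ≤ s → ∀ t : ℝ, 0 ≤ t → c (s + t) = c s * c t)
    (hc : Tendsto c (𝓝[>] 0) (𝓝 1)) : Tendsto c (𝓝[≥] 0) (𝓝 1) := by
  rw [← Ioi_insert, nhdsWithin_insert, tendsto_sup]
  refine ⟨?_, hc⟩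
  simpa [map_zero_eq_one_of_map_add hmul hc] using tendsto_pure_nhds c 0

lemma map_nat_mul_of_map_add (hmul : ∀ s : ℝ, 0 ≤ s → ∀ t : ℝ, 0 ≤ t → c (s + t) = c s * c t)
    (h0 : c 0 = 1) (n : ℕ) {s : ℝ} (hs : 0 ≤ s) : c (n * s) = c s ^ n := by
  induction n with
  | zero => simp [h0]
  | succ n ih =>
    rw [Nat.cast_succ, add_one_mul, hmul _ (by positivity) _ hs, ih, pow_succ]

lemma eq_one_of_map_add_of_eq_one_seq
    (hmul : ∀ s : ℝ, 0 ≤ s → ∀ t : ℝ, 0 ≤ t → c (s + t) = c s * c t)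
    (hc : Tendsto c (𝓝[≥] 0) (𝓝 1)) {u : ℕ → ℝ} (hupos : ∀ n, 0 < u n)
    (hu : Tendsto u atTop (𝓝 0)) (h1 : ∀ n, c (u n) = 1) {t : ℝ} (ht : 0 ≤ t) : c t = 1 := by
  have h0 : c 0 = 1 :=
    tendsto_nhds_unique (tendsto_pure_nhds c 0) (hc.mono_left (pure_le_nhdsWithin self_mem_Ici))
  set k : ℕ → ℕ := fun n => ⌊t / u n⌋₊
  set r : ℕ → ℝ := fun n => t - k n * u n
  have hr : ∀ n, 0 ≤ r n ∧ r n < u n := fun n => by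
    have hle := Nat.floor_le (div_nonneg ht (hupos n).le)
    have hlt := Nat.lt_floor_add_one (t / u n)
    rw [le_div_iff₀ (hupos n)] at hle
    rw [div_lt_iff₀ (hupos n)] at hlt
    constructor <;> simp only [r, k] <;> linarith
  have hct : ∀ n, c (r n) = c t := fun n => by
    have ht_eq : t = k n * u n + r n := by ring
    rw [ht_eq, hmul _ (mul_nonneg (Nat.cast_nonneg _) (hupos n).le) _ (hr n).1,
      map_nat_mul_of_map_add hmul h0 _ (hupos n).le, h1, one_pow, one_mul]
  have hr0 : Tendsto r atTop (𝓝[≥] 0) :=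
    tendsto_nhdsWithin_iff.2 ⟨squeeze_zero (fun n => (hr n).1) (fun n => (hr n).2.le) hu,
      Eventually.of_forall fun n => (hr n).1⟩
  exact tendsto_nhds_unique ((hc.comp hr0).congr hct) tendsto_const_nhds |>.symm

lemma exists_eq_exp_mul_div_two_pow_of_map_add
    (hmul : ∀ s : ℝ, 0 ≤ s → ∀ t : ℝ, 0 ≤ t → c (s + t) = c s * c t)
    (hc : Tendsto c (𝓝[≥] 0) (𝓝 1)) :
    ∃ δ > 0, ∃ b : ℂ, ∀ n : ℕ, c (δ / 2 ^ n) = exp (b * ↑(δ / 2 ^ n)) := by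
  obtain ⟨δ, hδ, hre⟩ : ∃ δ > 0, Icc 0 δ ⊆ c ⁻¹' {z | 0 < z.re} :=
    mem_nhdsGE_iff_exists_Icc_subset.1 <| hc <|
      (isOpen_lt continuous_const continuous_re).mem_nhds (by simp)
  set u : ℕ → ℝ := fun n => δ / 2 ^ n
  have hre_u : ∀ n, 0 < (c (u n)).re := fun n =>
    hre ⟨by positivity, div_le_self hδ.le (one_le_pow₀ one_le_two)⟩
  have hne : ∀ n, c (u n) ≠ 0 := fun n h => by simpa [h] using hre_u n
  -- `log` is halved by taking square roots in the right half-plane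
  have hlog : ∀ n, log (c (u n)) = log (c δ) / 2 ^ n := by
    intro n
    induction n with
    | zero => simp [u]
    | succ n ih =>
      have hsq : c (u n) = c (u (n + 1)) * c (u (n + 1)) := by
        rw [← hmul _ (by positivity) _ (by positivity)]
        congr 1
        simp only [u, pow_succ]
        ring
      have harg := abs_lt.1 (abs_arg_lt_pi_div_two_iff.2 (Or.inl (hre_u (n + 1))))
      rw [hsq, log_mul (hne _) (hne _) ⟨by linarith [Real.pi_pos], by linarith [Real.pi_pos]⟩]
        at ih
      rw [pow_succ]
      linear_combination ih / 2
  refine ⟨δ, hδ, log (c δ) / δ, fun n => ?_⟩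
  rw [← exp_log (hne n), hlog n]
  have hδ' : (δ : ℂ) ≠ 0 := ofReal_ne_zero.2 hδ.ne'
  congr 1
  push_cast
  field_simp

theorem exists_eq_exp_mul_of_map_add
    (hmul : ∀ s : ℝ, 0 ≤ s → ∀ t : ℝ, 0 ≤ t → c (s + t) = c s * c t)
    (hc : Tendsto c (𝓝[>] 0) (𝓝 1)) : ∃ b : ℂ, ∀ t : ℝ, 0 ≤ t → c t = exp (b * t) := by
  have hc' := tendsto_nhdsGE_of_map_add hmul hc
  obtain ⟨δ, hδ, b, hb⟩ := exists_eq_exp_mul_div_two_pow_of_map_add hmul hc'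
  refine ⟨b, fun t ht => ?_⟩
  set d : ℝ → ℂ := fun t => c t * exp (-(b * t))
  have hdmul : ∀ s : ℝ, 0 ≤ s → ∀ t : ℝ, 0 ≤ t → d (s + t) = d s * d t := fun s hs t ht => by
    simp only [d, hmul s hs t ht, ofReal_add, mul_add, neg_add, exp_add]
    ring
  have hd : Tendsto d (𝓝[≥] 0) (𝓝 1) := by
    simpa using hc'.mul ((by fun_prop : Continuous fun t : ℝ => exp (-(b * t))).tendsto 0
      |>.mono_left nhdsWithin_le_nhds)
  have hu : Tendsto (fun n : ℕ => δ / 2 ^ n) atTop (𝓝 0) := by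
    simpa [div_eq_mul_inv, inv_pow] using
      (tendsto_pow_atTop_nhds_zero_of_lt_one (by norm_num : (0 : ℝ) ≤ 2⁻¹)
        (by norm_num)).const_mul δ
  have hdt := eq_one_of_map_add_of_eq_one_seq hdmul hd (fun n => by positivity) hu
    (fun n => by simp [d, hb n, ← exp_add]) ht
  simp only [d] at hdt
  rwa [exp_neg, mul_inv_eq_one₀ (exp_ne_zero _)] at hdt

end MulOnNonneg

lemma inv_two_mem_unitDisk : (2⁻¹ : ℂ) ∈ unitDisk := by
  norm_num [mem_unitDisk]

lemma mapsTo_exp_I_mul_mul (φ t : ℝ) :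
    MapsTo (fun w => exp (I * φ * t) * w) unitDisk unitDisk := fun w hw => by
  simpa [mem_unitDisk, norm_exp] using hw

lemma tendsto_exp_I_mul_nhdsGT_zero {φ : ℝ} (hφ : φ ≠ 0) :
    Tendsto (fun t : ℝ => exp (I * φ * t)) (𝓝[>] 0) (𝓝[≠] 1) := by
  have hderiv : HasDerivAt (fun t : ℝ => exp (I * φ * t))
      (exp (I * φ * (0 : ℝ)) * (I * φ * 1)) 0 :=
    ((hasDerivAt_id (0 : ℝ)).ofReal_comp.const_mul (I * φ)).cexp
  refine tendsto_nhdsWithin_of_tendsto_nhds_of_eventually_within _ ?_ ?_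
  · simpa using hderiv.continuousAt.tendsto.mono_left nhdsWithin_le_nhds
  · exact (hderiv.eventually_ne (by simp [hφ])).filter_mono
      (nhdsWithin_mono _ fun t ht => ne_of_gt ht)

lemma exists_eq_mul_of_frequently_map_mul {H : ℂ → ℂ} (hH : DifferentiableOn ℂ H unitDisk)
    (hfreq : ∃ᶠ l in 𝓝[≠] (1 : ℂ), H (l * 2⁻¹) = l * H 2⁻¹) :
    ∃ c : ℂ, ∀ w ∈ unitDisk, H w = c * w := by
  have hmaps : MapsTo (fun l : ℂ => l * 2⁻¹) (Metric.ball 0 2) unitDisk := fun l hl => by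
    simp only [Metric.mem_ball, dist_zero_right] at hl
    rw [mem_unitDisk, norm_mul, norm_inv, RCLike.norm_ofNat]
    linarith
  have hana : AnalyticOnNhd ℂ (fun l => H (l * 2⁻¹) - l * H 2⁻¹) (Metric.ball 0 2) :=
    ((hH.comp (by fun_prop) hmaps).sub (by fun_prop)).analyticOnNhd Metric.isOpen_ball
  have hzero := hana.eqOn_zero_of_preconnected_of_frequently_eq_zero
    (convex_ball 0 2).isPreconnected (by norm_num) (hfreq.mono fun l hl => sub_eq_zero.2 hl)
  refine ⟨2 * H 2⁻¹, fun w hw => ?_⟩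
  have h2w : 2 * w ∈ Metric.ball (0 : ℂ) 2 := by
    rw [mem_unitDisk] at hw
    simpa [norm_mul] using hw
  have hHw := sub_eq_zero.1 (hzero h2w)
  rw [show 2 * w * 2⁻¹ = w by ring] at hHw
  rw [hHw]
  ring

namespace ContSemigroupOn

variable {G : ℝ → ℂ → ℂ}

lemma conj_mobius (hG : ContSemigroupOn G) {τ : ℂ} (hτ : τ ∈ unitDisk) :
    ContSemigroupOn fun t z => mobius τ (G t (mobius τ z)) where
  holo t ht := (differentiableOn_mobius hτ).comp
    ((hG.holo t ht).comp (differentiableOn_mobius hτ) (mapsTo_mobius hτ))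
    ((hG.maps t ht).comp (mapsTo_mobius hτ))
  maps t ht := (mapsTo_mobius hτ).comp ((hG.maps t ht).comp (mapsTo_mobius hτ))
  comp s hs t ht z hz := by
    have hmz := mobius_mem_unitDisk hτ hz
    rw [hG.comp s hs t ht _ hmz, mobius_mobius_of_mem hτ (hG.maps s hs hmz)]
  cont z hz := by
    have hmz := mobius_mem_unitDisk hτ hz
    have hlim := (continuousAt_mobius hτ hmz).tendsto.comp (hG.cont _ hmz)
    rwa [mobius_mobius_of_mem hτ hz] at hlim

lemma exists_eq_exp_mul (hG : ContSemigroupOn G)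
    (hlin : ∀ t : ℝ, 0 ≤ t → ∃ c : ℂ, ∀ w ∈ unitDisk, G t w = c * w) :
    ∃ b : ℂ, ∀ t : ℝ, 0 ≤ t → ∀ w ∈ unitDisk, G t w = exp (b * t) * w := by
  set c : ℝ → ℂ := fun t => 2 * G t 2⁻¹
  have hc : ∀ t : ℝ, 0 ≤ t → ∀ w ∈ unitDisk, G t w = c t * w := fun t ht w hw => by
    obtain ⟨c', hc'⟩ := hlin t ht
    simp only [c, hc' w hw, hc' _ inv_two_mem_unitDisk]
    ring
  have hmul : ∀ s : ℝ, 0 ≤ s → ∀ t : ℝ, 0 ≤ t → c (s + t) = c s * c t := fun s hs t ht => by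
    simp only [c]
    rw [hG.comp t ht s hs _ inv_two_mem_unitDisk, hc s hs _ (hG.maps t ht inv_two_mem_unitDisk)]
    ring
  have hlim : Tendsto c (𝓝[>] 0) (𝓝 1) := by
    simpa using (hG.cont _ inv_two_mem_unitDisk).const_mul 2
  obtain ⟨b, hb⟩ := exists_eq_exp_mul_of_map_add hmul hlim
  exact ⟨b, fun t ht w hw => by rw [hc t ht w hw, hb t ht]⟩

theorem commute_exp_I_mul_iff (hG : ContSemigroupOn G) {φ : ℝ} (hφ : φ ≠ 0) :
    (∀ t : ℝ, 0 ≤ t → ∀ s : ℝ, 0 ≤ s → ∀ w ∈ unitDisk,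
        G s (exp (I * φ * t) * w) = exp (I * φ * t) * G s w) ↔
      ∃ b : ℂ, ∀ t : ℝ, 0 ≤ t → ∀ w ∈ unitDisk, G t w = exp (b * t) * w := by
  constructor
  · intro hcomm
    refine hG.exists_eq_exp_mul fun s hs => exists_eq_mul_of_frequently_map_mul (hG.holo s hs) ?_
    refine (tendsto_exp_I_mul_nhdsGT_zero hφ).frequently (Eventually.frequently ?_)
    exact eventually_nhdsWithin_of_forall fun t ht =>
      hcomm t (le_of_lt ht) s hs _ inv_two_mem_unitDisk
  · rintro ⟨b, hb⟩ t ht s hs w hw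
    rw [hb s hs _ (mapsTo_exp_I_mul_mul φ t hw), hb s hs w hw, mul_left_comm]

end ContSemigroupOn

/-- Theorem 2(ii): a nontrivial group of elliptic automorphisms
`F_t(z) = m_τ(e^{iφt} m_τ(z))` commutes with a semigroup `{G_t}` if and only if
`G_t(z) = m_τ(e^{-at} m_τ(z))` for some `a ∈ ℂ`. -/
theorem commuting_with_elliptic_group_iff
    (τ : ℂ) (hτ : τ ∈ unitDisk) (φ : ℝ) (hφ : φ ≠ 0)
    (G : ℝ → ℂ → ℂ) (hSG : ContSemigroupOn G) :
    (∀ t : ℝ, 0 ≤ t → ∀ s : ℝ, 0 ≤ s → ∀ z ∈ unitDisk,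
        mobius τ (Complex.exp (Complex.I * φ * t) * mobius τ (G s z))
          = G s (mobius τ (Complex.exp (Complex.I * φ * t) * mobius τ z))) ↔
    (∃ a : ℂ, ∀ t : ℝ, 0 ≤ t → ∀ z ∈ unitDisk,
        G t z = mobius τ (Complex.exp (-a * t) * mobius τ z)) := by
  calc _ ↔ ∀ t : ℝ, 0 ≤ t → ∀ s : ℝ, 0 ≤ s → ∀ w ∈ unitDisk,
          mobius τ (G s (mobius τ (exp (I * φ * t) * w))) =
            exp (I * φ * t) * mobius τ (G s (mobius τ w)) :=
        forall₂_congr fun t _ => forall₂_congr fun s hs =>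
          forall_comm_conj_iff (r := fun w => exp (I * φ * t) * w)
            (fun _ => mobius_mobius_of_mem hτ) (mapsTo_mobius hτ) (hSG.maps s hs)
            (mapsTo_exp_I_mul_mul φ t)
    _ ↔ ∃ b : ℂ, ∀ t : ℝ, 0 ≤ t → ∀ w ∈ unitDisk,
          mobius τ (G t (mobius τ w)) = exp (b * t) * w :=
        (hSG.conj_mobius hτ).commute_exp_I_mul_iff hφ
    _ ↔ _ := neg_surjective.exists.trans <| exists_congr fun a => forall₂_congr fun t ht =>
        (forall_eq_mobius_mul_mobius_iff hτ (hSG.maps t ht) _).symm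
end
end

section
/- Let n be a positive integer and let p be holomorphic on Δ with Re p(z^n) ≥ 0 for all z ∈ Δ. Suppose g(z) = z·p(z^n) generates a one-parameter continuous semigroup S₂ = {G_t}_{t≥0} on Δ. Then for every t ≥ 0 and every z ∈ Δ one has G_t(e^{2πi/n}·z) = e^{2πi/n}·G_t(z); that is, the rotation F₁(z) = e^{2πi/n}·z commutes with every element G_t of the semigroup. -/
open Complex Filter Set

noncomputable section

/-! The generator `g(z) = z p(zⁿ)` is equivariant under the rotation `ω = e^{2πi/n}`:
`g(ωz) = ω g(z)`, because `ωⁿ = 1`. Hence `t ↦ ω G_t(z)` solves the same Cauchy problem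
`u' = -g(u)`, `u(0) = ωz`, as `t ↦ G_t(ωz)`. Both trajectories stay in the disk, where the
holomorphic `g` is locally Lipschitz, so they coincide by uniqueness of solutions. -/

theorem DifferentiableOn.locallyLipschitzOn {E : Type*} [NormedAddCommGroup E]
    [NormedSpace ℂ E] [CompleteSpace E] {f : ℂ → E} {s : Set ℂ}
    (hf : DifferentiableOn ℂ f s) (hs : IsOpen s) : LocallyLipschitzOn s f := by
  intro x hx
  obtain ⟨K, t, ht, hK⟩ :=
    ((hf.contDiffOn hs (n := 1)).contDiffAt (hs.mem_nhds hx)).exists_lipschitzOnWith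
  exact ⟨K, t, mem_nhdsWithin_of_mem_nhds ht, hK⟩

theorem ODE_solution_unique_of_locallyLipschitzOn_Ici {E : Type*} [NormedAddCommGroup E]
    [NormedSpace ℝ E] {v : E → E} {s : Set E} (hv : LocallyLipschitzOn s v) {f g : ℝ → E} {a : ℝ}
    (hf : ∀ t ∈ Ici a, HasDerivWithinAt f (v (f t)) (Ici a) t) (hfs : MapsTo f (Ici a) s)
    (hg : ∀ t ∈ Ici a, HasDerivWithinAt g (v (g t)) (Ici a) t) (hgs : MapsTo g (Ici a) s)
    (ha : f a = g a) : EqOn f g (Ici a) := by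
  intro t ht
  have hfc : ContinuousOn f (Icc a t) := fun τ hτ =>
    (hf τ hτ.1).continuousWithinAt.mono Icc_subset_Ici_self
  have hgc : ContinuousOn g (Icc a t) := fun τ hτ =>
    (hg τ hτ.1).continuousWithinAt.mono Icc_subset_Ici_self
  -- On `[a, t]` both solutions stay in a compact subset of `s`, on which `v` is Lipschitz.
  set K := f '' Icc a t ∪ g '' Icc a t
  have hKs : K ⊆ s := union_subset ((hfs.mono_left Icc_subset_Ici_self).image_subset)
    ((hgs.mono_left Icc_subset_Ici_self).image_subset)
  have hK : IsCompact K :=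
    (isCompact_Icc.image_of_continuousOn hfc).union (isCompact_Icc.image_of_continuousOn hgc)
  obtain ⟨L, hL⟩ := (hv.mono hKs).exists_lipschitzOnWith_of_compact hK
  exact ODE_solution_unique_of_mem_Icc_right (v := fun _ => v) (s := fun _ => K)
    (fun _ _ => hL) hfc (fun τ hτ => (hf τ hτ.1).mono (Ici_subset_Ici.2 hτ.1))
    (fun τ hτ => Or.inl (mem_image_of_mem f (Ico_subset_Icc_self hτ))) hgc
    (fun τ hτ => (hg τ hτ.1).mono (Ici_subset_Ici.2 hτ.1))
    (fun τ hτ => Or.inr (mem_image_of_mem g (Ico_subset_Icc_self hτ))) ha ⟨ht, le_rfl⟩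

theorem isOpen_unitDisk : IsOpen unitDisk :=
  isOpen_lt continuous_norm continuous_const

theorem mul_mem_unitDisk {ω z : ℂ} (hω : ‖ω‖ = 1) (hz : z ∈ unitDisk) : ω * z ∈ unitDisk := by
  simpa [unitDisk, hω] using hz

theorem pow_mem_unitDisk {n : ℕ} (hn : n ≠ 0) {z : ℂ} (hz : z ∈ unitDisk) : z ^ n ∈ unitDisk := by
  simpa [unitDisk] using pow_lt_one₀ (norm_nonneg z) hz hn

theorem Generates.eqOn_of_hasDerivWithinAt {g : ℂ → ℂ} {G : ℝ → ℂ → ℂ} (hgen : Generates g G)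
    (hSG : ContSemigroupOn G) (hg : DifferentiableOn ℂ g unitDisk) {z : ℂ} (hz : z ∈ unitDisk)
    {u : ℝ → ℂ} (hu : ∀ t ∈ Ici 0, HasDerivWithinAt u (-g (u t)) (Ici 0) t)
    (hus : MapsTo u (Ici 0) unitDisk) (hu₀ : u 0 = z) : EqOn u (G · z) (Ici 0) :=
  ODE_solution_unique_of_locallyLipschitzOn_Ici (hg.locallyLipschitzOn isOpen_unitDisk).neg
    hu hus (hgen z hz).2 (fun t ht => hSG.maps t ht hz) (hu₀.trans (hgen z hz).1.symm)

theorem Generates.map_mul_of_map_mul {g : ℂ → ℂ} {G : ℝ → ℂ → ℂ} (hgen : Generates g G)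
    (hSG : ContSemigroupOn G) (hg : DifferentiableOn ℂ g unitDisk) {ω : ℂ} (hω : ‖ω‖ = 1)
    (hgω : ∀ w ∈ unitDisk, g (ω * w) = ω * g w) {t : ℝ} (ht : 0 ≤ t) {z : ℂ}
    (hz : z ∈ unitDisk) : G t (ω * z) = ω * G t z := by
  have hGz : ∀ s ∈ Ici (0 : ℝ), G s z ∈ unitDisk := fun s hs => hSG.maps s hs hz
  refine (hgen.eqOn_of_hasDerivWithinAt hSG hg (mul_mem_unitDisk hω hz) (u := (ω * G · z))
    (fun s hs => ?_) (fun s hs => mul_mem_unitDisk hω (hGz s hs)) (by rw [(hgen z hz).1]) ht).symm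
  rw [hgω _ (hGz s hs), ← mul_neg]
  exact ((hgen z hz).2 s hs).const_mul ω

theorem rotation_commutes_with_semigroup_general
    (n : ℕ) (hn : 0 < n) (p : ℂ → ℂ)
    (hp : DifferentiableOn ℂ p unitDisk)
    (G : ℝ → ℂ → ℂ) (hSG : ContSemigroupOn G)
    (hgen : Generates (fun z => z * p (z ^ n)) G) :
    ∀ t : ℝ, 0 ≤ t → ∀ z ∈ unitDisk,
      G t (Complex.exp (2 * Real.pi * Complex.I / n) * z)
        = Complex.exp (2 * Real.pi * Complex.I / n) * G t z := by
  intro t ht z hz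
  have hω := Complex.isPrimitiveRoot_exp n hn.ne'
  have hg : DifferentiableOn ℂ (fun z => z * p (z ^ n)) unitDisk :=
    differentiableOn_id.mul
      (hp.comp (differentiableOn_pow n) fun _ => pow_mem_unitDisk hn.ne')
  refine hgen.map_mul_of_map_mul hSG hg (hω.norm'_eq_one hn.ne') (fun w _ => ?_) ht hz
  simp only [mul_pow, hω.pow_eq_one, one_mul]
  ring

/-- The Example: if `g(z) = z p(zⁿ)` with `Re p(zⁿ) ≥ 0` generates a semigroup `{G_t}`,
then the rotation `z ↦ e^{2πi/n} z` commutes with every `G_t`. -/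
theorem rotation_commutes_with_semigroup
    (n : ℕ) (hn : 0 < n) (p : ℂ → ℂ)
    (hp : DifferentiableOn ℂ p unitDisk)
    (hre : ∀ z ∈ unitDisk, 0 ≤ (p (z ^ n)).re)
    (G : ℝ → ℂ → ℂ) (hSG : ContSemigroupOn G)
    (hgen : Generates (fun z => z * p (z ^ n)) G) :
    ∀ t : ℝ, 0 ≤ t → ∀ z ∈ unitDisk,
      G t (Complex.exp (2 * Real.pi * Complex.I / n) * z)
        = Complex.exp (2 * Real.pi * Complex.I / n) * G t z :=
  rotation_commutes_with_semigroup_general n hn p hp G hSG hgen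
end
end
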